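/- (Block decomposition for counting repairs.) Let A and B be disjoint finite sets such that C(a,b) holds for every a ∈ A and every b ∈ B. Then for every E ⊆ A ∪ B with E ∩ A ≠ ∅ and E ∩ B ≠ ∅: every repair of E is contained entirely in E ∩ A or entirely in E ∩ B, and I_MC(E) = I_MC(E ∩ A) + I_MC(E ∩ B). -/
import Mathlib


open scoped BigOperators Classical

variable {α : Type*} [DecidableEq α]

/-- A finite set `E` is consistent if it contains no two distinct conflicting elements. -/
def Consistent (C : α → α → Prop) (E : Finset α) : Prop :=
  ∀ g ∈ E, ∀ h ∈ E, g ≠ h → ¬ C g h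

/-- A repair of `E` is a maximal (under inclusion) consistent subset of `E`. -/
def IsRepair (C : α → α → Prop) (S E : Finset α) : Prop :=
  S ⊆ E ∧ Consistent C S ∧ ∀ S', S ⊆ S' → S' ⊆ E → Consistent C S' → S' = S

/-- The inconsistency measure `I_MC`: the number of repairs of `E`. -/
noncomputable def IMC (C : α → α → Prop) (E : Finset α) : ℕ :=
  (E.powerset.filter fun S => IsRepair C S E).card

lemma repair_nonempty (C : α → α → Prop) {E S : Finset α} (hE : E.Nonempty)
    (h : IsRepair C S E) : S.Nonempty := by
  by_contra hne
  rw [Finset.not_nonempty_iff_eq_empty] at hne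
  subst hne
  obtain ⟨a, ha⟩ := hE
  have := h.2.2 {a} (Finset.empty_subset _) (by simpa using ha)
    (by intro g hg h' hh' hne; simp at hg hh'; subst hg; subst hh'; exact absurd rfl hne)
  simp at this

lemma repair_to_block (C : α → α → Prop) {E S : Finset α} (A : Finset α)
    (hSA : S ⊆ E ∩ A) (h : IsRepair C S E) : IsRepair C S (E ∩ A) := by
  refine ⟨hSA, h.2.1, fun S' h1 h2 h3 => h.2.2 S' h1 (h2.trans Finset.inter_subset_left) h3⟩

lemma repair_of_block (C : α → α → Prop) {E S : Finset α} {A B : Finset α}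
    (hdisj : Disjoint A B) (hC : ∀ a ∈ A, ∀ b ∈ B, C a b) (hE : E ⊆ A ∪ B)
    (hSne : S.Nonempty) (h : IsRepair C S (E ∩ A)) : IsRepair C S E := by
  refine ⟨h.1.trans Finset.inter_subset_left, h.2.1, ?_⟩
  intro S' h1 h2 h3
  obtain ⟨a, haS⟩ := hSne
  have haA : a ∈ A := (Finset.mem_inter.mp (h.1 haS)).2
  have hSA : S' ⊆ E ∩ A := by
    intro x hx
    have hxE := h2 hx
    rcases Finset.mem_union.mp (hE hxE) with hxA | hxB
    · exact Finset.mem_inter.mpr ⟨hxE, hxA⟩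
    · exact absurd (hC a haA x hxB)
        (h3 a (h1 haS) x hx (fun heq => hdisj.forall_ne_finset haA hxB heq))
  exact h.2.2 S' h1 hSA h3

/-- Block decomposition for counting repairs: if every element of `A` conflicts
with every element of `B` (with `A`, `B` disjoint) and `E ⊆ A ∪ B` meets both `A`
and `B`, then every repair of `E` lies within `E ∩ A` or within `E ∩ B`, and
`I_MC(E) = I_MC(E ∩ A) + I_MC(E ∩ B)`. -/
theorem IMC_block_decomposition (C : α → α → Prop) (hsymm : Symmetric C)
    (A B : Finset α) (hdisj : Disjoint A B)
    (hC : ∀ a ∈ A, ∀ b ∈ B, C a b) (E : Finset α) (hE : E ⊆ A ∪ B)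
    (hA : (E ∩ A).Nonempty) (hB : (E ∩ B).Nonempty) :
    (∀ S, IsRepair C S E → S ⊆ E ∩ A ∨ S ⊆ E ∩ B) ∧
      IMC C E = IMC C (E ∩ A) + IMC C (E ∩ B) := by
  have hC' : ∀ b ∈ B, ∀ a ∈ A, C b a := fun b hb a ha => hsymm (hC a ha b hb)
  have hE' : E ⊆ B ∪ A := by rwa [Finset.union_comm]
  have dich : ∀ S, IsRepair C S E → S ⊆ E ∩ A ∨ S ⊆ E ∩ B := by
    intro S hS
    by_contra hcon
    push_neg at hcon
    obtain ⟨x, hxS, hxA⟩ := Finset.not_subset.mp hcon.1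
    obtain ⟨y, hyS, hyB⟩ := Finset.not_subset.mp hcon.2
    have hxE := hS.1 hxS
    have hyE := hS.1 hyS
    have hxB : x ∈ B := by
      rcases Finset.mem_union.mp (hE hxE) with h | h
      · exact absurd (Finset.mem_inter.mpr ⟨hxE, h⟩) hxA
      · exact h
    have hyA : y ∈ A := by
      rcases Finset.mem_union.mp (hE hyE) with h | h
      · exact h
      · exact absurd (Finset.mem_inter.mpr ⟨hyE, h⟩) hyB
    exact hS.2.1 y hyS x hxS (fun heq => hdisj.forall_ne_finset hyA hxB heq)
      (hC y hyA x hxB)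
  refine ⟨dich, ?_⟩
  have key : E.powerset.filter (fun S => IsRepair C S E) =
      (E ∩ A).powerset.filter (fun S => IsRepair C S (E ∩ A)) ∪
      (E ∩ B).powerset.filter (fun S => IsRepair C S (E ∩ B)) := by
    ext S
    simp only [Finset.mem_union, Finset.mem_filter, Finset.mem_powerset]
    constructor
    · intro ⟨hsub, hrep⟩
      rcases dich S hrep with h | h
      · exact Or.inl ⟨h, repair_to_block C A h hrep⟩
      · exact Or.inr ⟨h, repair_to_block C B h hrep⟩
    · rintro (⟨hsub, hrep⟩ | ⟨hsub, hrep⟩)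
      · exact ⟨hsub.trans Finset.inter_subset_left,
          repair_of_block C hdisj hC hE (repair_nonempty C hA hrep) hrep⟩
      · exact ⟨hsub.trans Finset.inter_subset_left,
          repair_of_block C hdisj.symm hC' hE' (repair_nonempty C hB hrep) hrep⟩
  have hdisjf : Disjoint
      ((E ∩ A).powerset.filter (fun S => IsRepair C S (E ∩ A)))
      ((E ∩ B).powerset.filter (fun S => IsRepair C S (E ∩ B))) := by
    rw [Finset.disjoint_left]
    intro S h1 h2
    simp only [Finset.mem_filter, Finset.mem_powerset] at h1 h2
    obtain ⟨a, ha⟩ := repair_nonempty C hA h1.2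
    have haA : a ∈ A := (Finset.mem_inter.mp (h1.1 ha)).2
    have haB : a ∈ B := (Finset.mem_inter.mp (h2.1 ha)).2
    exact hdisj.forall_ne_finset haA haB rfl
  rw [IMC, key, Finset.card_union_of_disjoint hdisjf]
  rfl
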